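/- Let K be a subfield of the field ℚ̄ of algebraic numbers and let n ∈ ℕ. Then n ∈ 𝔇_K(n), the minimum of 𝔇_K(n) equals c_K(n) and lies in 𝔇_K(n), 𝔇_K(n) = c_K(n)·ℕ (the set of positive multiples of c_K(n)), and c_K(n) divides n. -/

import Mathlib

noncomputable section

/-- The primitive `n`-th root of unity `exp(2πi/n)` in `ℂ`. -/
def zetaC (n : ℕ) : ℂ := Complex.exp (2 * Real.pi * Complex.I / n)

/-- The `n`-th cyclotomic field `E_n = ℚ(ζ_n)`, as an intermediate field of `ℂ/ℚ`. -/
def Ecyc (n : ℕ) : IntermediateField ℚ ℂ := IntermediateField.adjoin ℚ {zetaC n}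

/-- Writing `n = 2^j * m` with `m` odd, `E_n^+ = ℚ(ζ_{2^j} + ζ_{2^j}⁻¹)·E_m` if `j ≥ 3`,
and `E_n^+ = E_m` if `j ≤ 2`. -/
def EcycP (n : ℕ) : IntermediateField ℚ ℂ :=
  if 3 ≤ n.factorization 2 then
    IntermediateField.adjoin ℚ
        {zetaC (2 ^ n.factorization 2) + (zetaC (2 ^ n.factorization 2))⁻¹} ⊔
      Ecyc (n / 2 ^ n.factorization 2)
  else Ecyc (n / 2 ^ n.factorization 2)

/-- Writing `n = 2^j * m` with `m` odd, `E_n^- = ℚ(ζ_{2^j} - ζ_{2^j}⁻¹)·E_m` if `j ≥ 3`,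
and `E_n^- = E_m` if `j ≤ 2`. -/
def EcycM (n : ℕ) : IntermediateField ℚ ℂ :=
  if 3 ≤ n.factorization 2 then
    IntermediateField.adjoin ℚ
        {zetaC (2 ^ n.factorization 2) - (zetaC (2 ^ n.factorization 2))⁻¹} ⊔
      Ecyc (n / 2 ^ n.factorization 2)
  else Ecyc (n / 2 ^ n.factorization 2)

/-- The gcd of a set of natural numbers (`0` if the set is empty), realised as the
largest common divisor. -/
def setGcd (S : Set ℕ) : ℕ := sSup {g : ℕ | ∀ s ∈ S, g ∣ s}

/-- `𝔇_K(n) = {d ∈ ℕ : K ∩ E_n ⊆ E_d}` (with `d` positive). -/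
def Dset (K : IntermediateField ℚ ℂ) (n : ℕ) : Set ℕ :=
  {d | 0 < d ∧ K ⊓ Ecyc n ≤ Ecyc d}

/-- `𝔇_K^+(n) = {d ∈ ℕ : K ∩ E_n ⊆ E_d^+}` (with `d` positive). -/
def DsetP (K : IntermediateField ℚ ℂ) (n : ℕ) : Set ℕ :=
  {d | 0 < d ∧ K ⊓ Ecyc n ≤ EcycP d}

/-- `𝔇_K^-(n) = {d ∈ ℕ : K ∩ E_n ⊆ E_d^-}` (with `d` positive). -/
def DsetM (K : IntermediateField ℚ ℂ) (n : ℕ) : Set ℕ :=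
  {d | 0 < d ∧ K ⊓ Ecyc n ≤ EcycM d}

/-- `c_K(n) = gcd 𝔇_K(n)`. -/
def cK (K : IntermediateField ℚ ℂ) (n : ℕ) : ℕ := setGcd (Dset K n)

/-- `c_K^+(n) = gcd 𝔇_K^+(n)`. -/
def cKP (K : IntermediateField ℚ ℂ) (n : ℕ) : ℕ := setGcd (DsetP K n)

/-- `c_K^-(n) = gcd 𝔇_K^-(n)`. -/
def cKM (K : IntermediateField ℚ ℂ) (n : ℕ) : ℕ := setGcd (DsetM K n)

/-- The compositum `F·A`, viewed as a field extension of `A`. -/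
def relField (F A : IntermediateField ℚ ℂ) : IntermediateField ↥A ℂ :=
  IntermediateField.extendScalars (le_sup_right : A ≤ F ⊔ A)

/-- The relative degree `[F·A : A]`. -/
def relDeg (F A : IntermediateField ℚ ℂ) : ℕ := Module.finrank ↥A ↥(relField F A)

/-- The Galois group `Gal(F·A / A)`. -/
abbrev RelGal (F A : IntermediateField ℚ ℂ) :=
  ↥(relField F A) ≃ₐ[↥A] ↥(relField F A)

end

/-! The heart of the matter is `E_a ∩ E_b ⊆ E_{gcd(a,b)}`. Inside `E_{ab}`, an automorphism
`σ : ζ ↦ ζ^u` fixing `E_{gcd(a,b)}` has `u ≡ 1 mod gcd(a,b)`, so by the Chinese remainder theorem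
there is `v` with `v ≡ u mod a` and `v ≡ 1 mod b`. Then `σ = τ ∘ (τ⁻¹ ∘ σ)` where `τ : ζ ↦ ζ^v`
fixes `E_b` and `τ⁻¹ ∘ σ` fixes `E_a`, so `σ` fixes `E_a ∩ E_b`, and Galois theory puts
`E_a ∩ E_b` inside `E_{gcd(a,b)}`. Hence `𝔇_K(n)` is closed under `gcd` and under multiplication
by positive integers, so its least element divides every element and is its gcd. -/

open IntermediateField Polynomial

theorem IsPrimitiveRoot.pow_eq_pow_iff_modEq {M : Type*} [CommMonoid M] {η : M} {d : ℕ}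
    (hη : IsPrimitiveRoot η d) (hd : d ≠ 0) {u v : ℕ} : η ^ u = η ^ v ↔ u ≡ v [MOD d] := by
  rw [hη.eq_orderOf]
  exact (hη.isOfFinOrder hd).pow_eq_pow_iff_modEq

section Galois

variable {F L : Type*} [Field F] [Field L] [Algebra F L]

theorem AlgEquiv.mem_fixingSubgroup_adjoin_singleton {σ : L ≃ₐ[F] L} {η : L} (h : σ η = η) :
    σ ∈ (adjoin F {η}).fixingSubgroup := by
  rw [IntermediateField.mem_fixingSubgroup_iff]
  intro y hy
  induction hy using adjoin_induction with
  | mem x hx => rwa [Set.mem_singleton_iff.1 hx]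
  | algebraMap x => exact σ.commutes x
  | add x y _ _ hx hy => rw [map_add, hx, hy]
  | inv x _ hx => rw [map_inv₀, hx]
  | mul x y _ _ hx hy => rw [map_mul, hx, hy]

variable {N : ℕ} [NeZero N] {ζ : L}

theorem IsPrimitiveRoot.exists_coprime_algEquiv_apply_eq_pow (hζ : IsPrimitiveRoot ζ N)
    (σ : L ≃ₐ[F] L) : ∃ u : ℕ, u.Coprime N ∧ σ ζ = ζ ^ u :=
  ⟨_, ZMod.val_coe_unit_coprime _, (hζ.autToPow_spec F σ).symm⟩

theorem IsPrimitiveRoot.exists_algEquiv_apply_eq_pow [IsCyclotomicExtension {N} F L]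
    (hζ : IsPrimitiveRoot ζ N) (hirr : Irreducible (cyclotomic N F)) {v : ℕ} (hv : v.Coprime N) :
    ∃ τ : L ≃ₐ[F] L, τ ζ = ζ ^ v := by
  have := IsCyclotomicExtension.neZero' N F L
  have hζv := hζ.pow_of_coprime v hv
  refine ⟨(hζ.powerBasis F).equivOfMinpoly (hζv.powerBasis F) ?_, ?_⟩
  · simp only [IsPrimitiveRoot.powerBasis_gen]
    rw [← hζ.minpoly_eq_cyclotomic_of_irreducible hirr,
      ← hζv.minpoly_eq_cyclotomic_of_irreducible hirr]
  · simpa using (hζ.powerBasis F).equivOfMinpoly_gen (hζv.powerBasis F) _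

theorem IsPrimitiveRoot.mem_fixingSubgroup_adjoin_iff_modEq {η : L} {d u : ℕ}
    (hη : IsPrimitiveRoot η d) (hd : d ≠ 0) {σ : L ≃ₐ[F] L} (hσ : σ η = η ^ u) :
    σ ∈ (adjoin F {η}).fixingSubgroup ↔ u ≡ 1 [MOD d] := by
  rw [← hη.pow_eq_pow_iff_modEq hd, pow_one, ← hσ]
  exact ⟨fun h => (IntermediateField.mem_fixingSubgroup_iff _ _).1 h _
    (mem_adjoin_simple_self F η), AlgEquiv.mem_fixingSubgroup_adjoin_singleton⟩

theorem IsPrimitiveRoot.adjoin_pow_inf_adjoin_pow_le {a b : ℕ} [NeZero a] [NeZero b]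
    [IsCyclotomicExtension {a * b} F L] (hζ : IsPrimitiveRoot ζ (a * b))
    (hirr : Irreducible (cyclotomic (a * b) F)) :
    adjoin F {ζ ^ b} ⊓ adjoin F {ζ ^ a} ≤ adjoin F {ζ ^ a.lcm b} := by
  have ha : a ≠ 0 := NeZero.ne a
  have hb : b ≠ 0 := NeZero.ne b
  have hl : a.lcm b ≠ 0 := Nat.lcm_ne_zero ha hb
  have := IsCyclotomicExtension.isGalois {a * b} F L
  have := IsCyclotomicExtension.finiteDimensional {a * b} F L
  have hηa : IsPrimitiveRoot (ζ ^ b) a := by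
    simpa [hb] using hζ.pow_of_dvd hb (dvd_mul_left b a)
  have hηb : IsPrimitiveRoot (ζ ^ a) b := by
    simpa [ha] using hζ.pow_of_dvd ha (dvd_mul_right a b)
  have hηg : IsPrimitiveRoot (ζ ^ a.lcm b) (a.gcd b) := by
    have := hζ.pow_of_dvd hl (Nat.lcm_dvd_mul a b)
    rwa [← Nat.gcd_mul_lcm, Nat.mul_div_cancel _ (Nat.pos_of_ne_zero hl)] at this
  have apply_pow : ∀ (ρ : L ≃ₐ[F] L) (w m : ℕ), ρ ζ = ζ ^ w → ρ (ζ ^ m) = (ζ ^ m) ^ w := by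
    intro ρ w m h
    rw [map_pow, h, ← pow_mul, ← pow_mul, mul_comm]
  rintro y ⟨hya, hyb⟩
  rw [← IsGalois.fixedField_fixingSubgroup (adjoin F {ζ ^ a.lcm b})]
  rintro ⟨σ, hσ⟩
  show σ y = y
  obtain ⟨u, hu, hσζ⟩ := hζ.exists_coprime_algEquiv_apply_eq_pow σ
  have hug : u ≡ 1 [MOD a.gcd b] :=
    (hηg.mem_fixingSubgroup_adjoin_iff_modEq (Nat.gcd_ne_zero_left ha) (apply_pow σ u _ hσζ)).1 hσ
  obtain ⟨v, hva, hvb⟩ := Nat.chineseRemainder' hug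
  have hv : v.Coprime (a * b) := Nat.Coprime.mul_right
    (hva.gcd_eq.trans (hu.coprime_dvd_right (dvd_mul_right a b)))
    (hvb.gcd_eq.trans (Nat.gcd_one_left b))
  obtain ⟨τ, hτζ⟩ := hζ.exists_algEquiv_apply_eq_pow hirr hv
  have hτ : τ ∈ (adjoin F {ζ ^ a}).fixingSubgroup :=
    (hηb.mem_fixingSubgroup_adjoin_iff_modEq hb (apply_pow τ v a hτζ)).2 hvb
  have hρ : τ⁻¹ * σ ∈ (adjoin F {ζ ^ b}).fixingSubgroup := by
    refine AlgEquiv.mem_fixingSubgroup_adjoin_singleton ?_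
    show τ.symm (σ (ζ ^ b)) = ζ ^ b
    rw [AlgEquiv.symm_apply_eq, apply_pow σ u b hσζ, apply_pow τ v b hτζ]
    exact (hηa.pow_eq_pow_iff_modEq ha).2 hva.symm
  calc σ y = τ ((τ⁻¹ * σ) y) := by simp
    _ = y := by
      rw [(IntermediateField.mem_fixingSubgroup_iff _ _).1 hρ y hya,
        (IntermediateField.mem_fixingSubgroup_iff _ _).1 hτ y hyb]

end Galois

theorem zetaC_isPrimitiveRoot {n : ℕ} (hn : n ≠ 0) : IsPrimitiveRoot (zetaC n) n :=
  Complex.isPrimitiveRoot_exp n hn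

theorem zetaC_mul_pow {d m : ℕ} (hm : m ≠ 0) : zetaC (d * m) ^ m = zetaC d := by
  rw [zetaC, zetaC, ← Complex.exp_nat_mul]
  congr 1
  push_cast
  field_simp

theorem zetaC_mem_Ecyc (n : ℕ) : zetaC n ∈ Ecyc n :=
  mem_adjoin_simple_self ℚ _

theorem Ecyc_le_Ecyc_of_dvd {d n : ℕ} (hn : n ≠ 0) (h : d ∣ n) : Ecyc d ≤ Ecyc n := by
  obtain ⟨m, rfl⟩ := h
  rw [Ecyc, adjoin_simple_le_iff, ← zetaC_mul_pow (right_ne_zero_of_mul hn)]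
  exact pow_mem (zetaC_mem_Ecyc _) m

instance Ecyc.isCyclotomicExtension (n : ℕ) [NeZero n] :
    IsCyclotomicExtension {n} ℚ (Ecyc n) := by
  have hζ := zetaC_isPrimitiveRoot (NeZero.ne n)
  change IsCyclotomicExtension {n} ℚ (adjoin ℚ {zetaC n}).toSubalgebra
  rw [adjoin_simple_toSubalgebra_of_isAlgebraic
    ((hζ.isIntegral (NeZero.pos n)).tower_top (A := ℚ)).isAlgebraic]
  exact hζ.adjoin_isCyclotomicExtension ℚ

-- `(Ecyc N).val` is linear for the subfield's own `ℚ`-algebra structure, whereas `adjoin ℚ`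
-- on `Ecyc N` picks up `DivisionRing.toRatAlgebra`; `toRatAlgHom` sidesteps that mismatch.
theorem map_adjoin_zetaC_pow {N d m : ℕ} (h : d * m = N) (hm : m ≠ 0) :
    (adjoin ℚ {(⟨zetaC N, zetaC_mem_Ecyc N⟩ : Ecyc N) ^ m}).map
      (Ecyc N).val.toRingHom.toRatAlgHom = Ecyc d := by
  subst h
  rw [adjoin_map, Set.image_singleton, map_pow]
  exact congrArg (adjoin ℚ {·}) (zetaC_mul_pow hm)

theorem Ecyc_inf_Ecyc_le_Ecyc_gcd {a b : ℕ} (ha : a ≠ 0) (hb : b ≠ 0) :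
    Ecyc a ⊓ Ecyc b ≤ Ecyc (a.gcd b) := by
  have : NeZero a := ⟨ha⟩
  have : NeZero b := ⟨hb⟩
  have hN : a * b ≠ 0 := mul_ne_zero ha hb
  have hζ : IsPrimitiveRoot (⟨zetaC (a * b), zetaC_mem_Ecyc _⟩ : Ecyc (a * b)) (a * b) :=
    IsPrimitiveRoot.coe_submonoidClass_iff.1 (zetaC_isPrimitiveRoot hN)
  calc Ecyc a ⊓ Ecyc b = _ := by
        rw [← map_adjoin_zetaC_pow rfl hb, ← map_adjoin_zetaC_pow (mul_comm b a) ha,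
          ← IntermediateField.map_inf]
    _ ≤ _ := map_mono _ <|
        hζ.adjoin_pow_inf_adjoin_pow_le (cyclotomic.irreducible_rat (Nat.pos_of_ne_zero hN))
    _ = Ecyc (a.gcd b) := map_adjoin_zetaC_pow (Nat.gcd_mul_lcm a b) (Nat.lcm_ne_zero ha hb)

theorem sInf_dvd_of_gcd_mem {S : Set ℕ} (hS : ∀ d ∈ S, 0 < d)
    (hgcd : ∀ d ∈ S, ∀ e ∈ S, d.gcd e ∈ S) {d : ℕ} (hd : d ∈ S) : sInf S ∣ d := by
  have hc : sInf S ∈ S := Nat.sInf_mem ⟨d, hd⟩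
  have hle : sInf S ≤ (sInf S).gcd d := Nat.sInf_le (hgcd _ hc _ hd)
  rw [← Nat.gcd_eq_left_iff_dvd]
  exact le_antisymm (Nat.gcd_le_left _ (hS _ hc)) hle

theorem setGcd_eq_of_mem_of_forall_dvd {S : Set ℕ} {c : ℕ} (hc : c ∈ S) (hc0 : 0 < c)
    (hdvd : ∀ d ∈ S, c ∣ d) : setGcd S = c :=
  IsGreatest.csSup_eq ⟨hdvd, fun _ hg => Nat.le_of_dvd hc0 (hg c hc)⟩

section Dset

variable (K : IntermediateField ℚ ℂ) {n : ℕ}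

theorem self_mem_Dset (hn : 0 < n) : n ∈ Dset K n :=
  ⟨hn, inf_le_right⟩

variable {K}

theorem gcd_mem_Dset {d e : ℕ} (hd : d ∈ Dset K n) (he : e ∈ Dset K n) : d.gcd e ∈ Dset K n :=
  ⟨Nat.gcd_pos_of_pos_left _ hd.1,
    (le_inf hd.2 he.2).trans (Ecyc_inf_Ecyc_le_Ecyc_gcd hd.1.ne' he.1.ne')⟩

theorem mul_mem_Dset {d k : ℕ} (hd : d ∈ Dset K n) (hk : 0 < k) : d * k ∈ Dset K n :=
  ⟨Nat.mul_pos hd.1 hk,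
    hd.2.trans (Ecyc_le_Ecyc_of_dvd (Nat.mul_pos hd.1 hk).ne' (dvd_mul_right d k))⟩

end Dset

theorem stmt_7_general (K : IntermediateField ℚ ℂ)
    (n : ℕ) (hn : 0 < n) :
    n ∈ Dset K n ∧
    cK K n ∈ Dset K n ∧
    IsLeast (Dset K n) (cK K n) ∧
    Dset K n = {d : ℕ | ∃ k : ℕ, 0 < k ∧ d = cK K n * k} ∧
    cK K n ∣ n := by
  have hnD := self_mem_Dset K hn
  have hcD : sInf (Dset K n) ∈ Dset K n := Nat.sInf_mem ⟨n, hnD⟩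
  have hdvd : ∀ d ∈ Dset K n, sInf (Dset K n) ∣ d := fun d =>
    sInf_dvd_of_gcd_mem (fun _ hd => hd.1) (fun _ hd _ he => gcd_mem_Dset hd he)
  rw [cK, setGcd_eq_of_mem_of_forall_dvd hcD hcD.1 hdvd]
  refine ⟨hnD, hcD, ⟨hcD, fun d hd => Nat.le_of_dvd hd.1 (hdvd d hd)⟩, ?_, hdvd n hnD⟩
  ext d
  constructor
  · intro hd
    obtain ⟨k, rfl⟩ := hdvd d hd
    exact ⟨k, Nat.pos_of_mul_pos_left hd.1, rfl⟩
  · rintro ⟨k, hk, rfl⟩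
    exact mul_mem_Dset hcD hk

/-- For a subfield `K` of the algebraic numbers and `n ∈ ℕ`: `n ∈ 𝔇_K(n)`,
`c_K(n)` is the minimum of `𝔇_K(n)` (in particular lies in it), `𝔇_K(n)` is the set of
positive multiples of `c_K(n)`, and `c_K(n) ∣ n`. -/
theorem stmt_7 (K : IntermediateField ℚ ℂ) (hK : ∀ x ∈ K, IsAlgebraic ℚ x)
    (n : ℕ) (hn : 0 < n) :
    n ∈ Dset K n ∧
    cK K n ∈ Dset K n ∧
    IsLeast (Dset K n) (cK K n) ∧
    Dset K n = {d : ℕ | ∃ k : ℕ, 0 < k ∧ d = cK K n * k} ∧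
    cK K n ∣ n :=
  stmt_7_general K n hn
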